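/- arXiv:2605.01571 — 3 statements merged into one kernel-verified Lean document; each statement's English description precedes it below -/
import Mathlib

section
/- (Fitted values in the underdetermined case) Let Z ∈ ℝ^{n×m} with ZZᵀ invertible, Z⁺ = Zᵀ(ZZᵀ)⁻¹, S = ZᵀZ, and Q ∈ ℝ^{m×m} with S+Q invertible. For d ∈ ℝ set b_d = (S+Q)⁻¹(Zᵀy + d·Q·Z⁺y) and ŷ_d = Z·b_d. Then ŷ_d = y − (1−d)·B·y, where B = Z(S+Q)⁻¹QZ⁺ does not depend on d. -/
open Matrix

/-- Fitted values in the underdetermined case: With `ZZᵀ` invertible,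
`Z⁺ = Zᵀ(ZZᵀ)⁻¹`, `S = ZᵀZ`, `S+Q` invertible, `b_d = (S+Q)⁻¹(Zᵀy + d·Q·Z⁺y)` and
`ŷ_d = Z b_d`, we have `ŷ_d = y − (1−d)·B·y` where `B = Z(S+Q)⁻¹QZ⁺` does not depend on `d`. -/
theorem stmt_13 {n m : ℕ} (Z : Matrix (Fin n) (Fin m) ℝ)
    (hrow : IsUnit (Z * Zᵀ).det)
    (Zp : Matrix (Fin m) (Fin n) ℝ) (hZp : Zp = Zᵀ * (Z * Zᵀ)⁻¹)
    (S : Matrix (Fin m) (Fin m) ℝ) (hS : S = Zᵀ * Z)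
    (Q : Matrix (Fin m) (Fin m) ℝ) (hinv : IsUnit (S + Q).det)
    (y : Fin n → ℝ) (d : ℝ)
    (bd : Fin m → ℝ)
    (hbd : bd = (S + Q)⁻¹.mulVec (Zᵀ.mulVec y + d • Q.mulVec (Zp.mulVec y)))
    (B : Matrix (Fin n) (Fin n) ℝ) (hB : B = Z * (S + Q)⁻¹ * Q * Zp) :
    Z.mulVec bd = y - (1 - d) • B.mulVec y := by
  have h1 : S * Zp = Zᵀ := by
    rw [hS, hZp, Matrix.mul_assoc, ← Matrix.mul_assoc Z, Matrix.mul_nonsing_inv _ hrow,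
      Matrix.mul_one]
  have h2 : Z * Zp = 1 := by
    rw [hZp, ← Matrix.mul_assoc, Matrix.mul_nonsing_inv _ hrow]
  have h3 : (S + Q)⁻¹ * (S + Q) = 1 := Matrix.nonsing_inv_mul _ hinv
  have hsplit : Zᵀ + d • (Q * Zp) = (S + Q) * Zp - (1 - d) • (Q * Zp) := by
    rw [← h1, Matrix.add_mul, sub_smul, one_smul]
    abel
  have key : Z * ((S + Q)⁻¹ * (Zᵀ + d • (Q * Zp))) = 1 - (1 - d) • B := by
    rw [hsplit, Matrix.mul_sub, ← Matrix.mul_assoc _ (S + Q) Zp, h3, Matrix.one_mul,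
      Matrix.mul_smul, Matrix.mul_sub, h2, Matrix.mul_smul, hB]
    rw [Matrix.mul_assoc (Z * (S + Q)⁻¹), Matrix.mul_assoc Z]
  have hv : Zᵀ.mulVec y + d • Q.mulVec (Zp.mulVec y) = (Zᵀ + d • (Q * Zp)).mulVec y := by
    rw [Matrix.add_mulVec, Matrix.smul_mulVec, Matrix.mulVec_mulVec]
  rw [hbd, hv, Matrix.mulVec_mulVec, Matrix.mulVec_mulVec, Matrix.mul_assoc, key,
    Matrix.sub_mulVec, Matrix.one_mulVec, Matrix.smul_mulVec]
end

section
/- (Degeneracy of GCV) In the underdetermined setting (Z full row rank, ŷ_d = y − (1−d)By for all d with B = Z(S+Q)⁻¹QZ⁺, H_d = I − (1−d)B), the GCV criterion GCV(d) = ‖y − ŷ_d‖² / (n − tr(H_d))² satisfies GCV(d) = ‖By‖² / tr(B)² for every d ≠ 1 with tr(B) ≠ 0; in particular GCV(d) is constant in d on ℝ \ {1}. -/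
open Matrix

/-- Degeneracy of GCV: In the underdetermined setting, with
`ŷ_d = y − (1−d)By`, `H_d = I − (1−d)B`, `B = Z(S+Q)⁻¹QZ⁺` and `tr(B) ≠ 0`, the GCV criterion
`GCV(d) = ‖y − ŷ_d‖² / (n − tr(H_d))²` equals `‖By‖²/tr(B)²` for every `d ≠ 1`;
in particular it is constant in `d` on `ℝ \ {1}`. -/
theorem stmt_14 {n m : ℕ} (Z : Matrix (Fin n) (Fin m) ℝ)
    (hrow : IsUnit (Z * Zᵀ).det)
    (Zp : Matrix (Fin m) (Fin n) ℝ) (hZp : Zp = Zᵀ * (Z * Zᵀ)⁻¹)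
    (S : Matrix (Fin m) (Fin m) ℝ) (hS : S = Zᵀ * Z)
    (Q : Matrix (Fin m) (Fin m) ℝ) (hinv : IsUnit (S + Q).det)
    (B : Matrix (Fin n) (Fin n) ℝ) (hB : B = Z * (S + Q)⁻¹ * Q * Zp)
    (htrB : B.trace ≠ 0)
    (y : Fin n → ℝ)
    (yhat : ℝ → Fin n → ℝ) (hyhat : ∀ d, yhat d = y - (1 - d) • B.mulVec y)
    (H : ℝ → Matrix (Fin n) (Fin n) ℝ)
    (hH : ∀ d, H d = (1 : Matrix (Fin n) (Fin n) ℝ) - (1 - d) • B)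
    (GCV : ℝ → ℝ)
    (hGCV : ∀ d, GCV d = (∑ i, (y i - yhat d i) ^ 2) / ((n : ℝ) - (H d).trace) ^ 2) :
    ∀ d : ℝ, d ≠ 1 → GCV d = (∑ i, (B.mulVec y i) ^ 2) / B.trace ^ 2 := by
  intro d hd
  have hc : (1 - d) ≠ 0 := by intro h; apply hd; linarith [sub_eq_zero.mp h]
  have h1 : ∀ i, y i - yhat d i = (1 - d) * B.mulVec y i := by
    intro i; rw [hyhat d]; simp [Pi.sub_apply]
  have h2 : ((n : ℝ) - (H d).trace) = (1 - d) * B.trace := by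
    rw [hH d]; simp [trace_sub, trace_smul, trace_one, smul_eq_mul]
  rw [hGCV d, h2]
  have h3 : (∑ i, (y i - yhat d i) ^ 2) = (1 - d)^2 * ∑ i, (B.mulVec y i)^2 := by
    rw [Finset.mul_sum]; apply Finset.sum_congr rfl; intro i _; rw [h1 i]; ring
  rw [h3, mul_pow]
  rw [mul_div_mul_left _ _ (pow_ne_zero 2 hc)]
end

section
/- (Degeneracy of PRESS/LOO-CV) In the underdetermined setting with H_d = I − (1−d)B (B independent of d, diagonal entries B_{ii} ≠ 0 for all i), the PRESS criterion PRESS(d) = Σᵢ ((yᵢ − ŷ_{d,i})/(1 − H_{d,ii}))² equals Σᵢ ((By)ᵢ / B_{ii})² for every d ≠ 1, hence is independent of d. -/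
open Matrix

/-- Degeneracy of PRESS/LOO-CV: With `ŷ_d = y − (1−d)By`,
`H_d = I − (1−d)B`, and all diagonal entries `B_{ii} ≠ 0`, the PRESS criterion
`PRESS(d) = Σᵢ ((yᵢ − ŷ_{d,i})/(1 − H_{d,ii}))²` equals `Σᵢ ((By)ᵢ/B_{ii})²` for every
`d ≠ 1`, hence is independent of `d`. -/
theorem stmt_15 {n : ℕ} (B : Matrix (Fin n) (Fin n) ℝ)
    (hBdiag : ∀ i, B i i ≠ 0)
    (y : Fin n → ℝ)
    (yhat : ℝ → Fin n → ℝ) (hyhat : ∀ d, yhat d = y - (1 - d) • B.mulVec y)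
    (H : ℝ → Matrix (Fin n) (Fin n) ℝ)
    (hH : ∀ d, H d = (1 : Matrix (Fin n) (Fin n) ℝ) - (1 - d) • B)
    (PRESS : ℝ → ℝ)
    (hPRESS : ∀ d, PRESS d = ∑ i, ((y i - yhat d i) / (1 - H d i i)) ^ 2) :
    ∀ d : ℝ, d ≠ 1 → PRESS d = ∑ i, (B.mulVec y i / B i i) ^ 2 := by
  intro d hd
  have hd' : (1 : ℝ) - d ≠ 0 := sub_ne_zero.mpr (fun h => hd h.symm)
  rw [hPRESS]
  apply Finset.sum_congr rfl
  intro i _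
  rw [hyhat, hH]
  simp only [Pi.sub_apply, Pi.smul_apply, smul_eq_mul, Matrix.sub_apply,
    Matrix.smul_apply, Matrix.one_apply_eq, smul_eq_mul]
  rw [show y i - (y i - (1 - d) * B.mulVec y i) = (1 - d) * B.mulVec y i by ring,
    show (1 : ℝ) - (1 - (1 - d) * B i i) = (1 - d) * B i i by ring,
    mul_div_mul_left _ _ hd']
end
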